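/- For positive reals a ≠ b with 0 < |b−a| < 1, and for every positive integer k, the double inequality ((k−1)!/2)[(1/(b−a)+1)/a^k + (1−1/(b−a))/b^k] < (−1)^{k−1}(ψ^{(k−1)}(b) − ψ^{(k−1)}(a))/(b−a) < ((k−1)!/2)[(1/(b−a)+1/|b−a|)/a^k + (1/|b−a|−1/(b−a))/b^k] holds (i.e., the bounds with β = 1 and γ = 1/|b−a|). -/

import Mathlib

/-!
Since `log ∘ Γ` is convex and `Γ (x + 1) = x Γ x`, `ψ` is monotone with `ψ (x + 1) = ψ x + x⁻¹`,
which forces `ψ b - ψ a = ∑ₙ ((a + n)⁻¹ - (b + n)⁻¹)`. Differentiating termwise,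
`(-1) ^ j (ψ⁽ʲ⁾ b - ψ⁽ʲ⁾ a) / j! = ∑ₙ (f (a + n) - f (b + n))` with `f x = (x ^ (j + 1))⁻¹`.

For `0 < t = b - a < 1` each term lies below the telescoping difference `f (a + n) - f (a + n + 1)`
and above `((1 + t) (f (a + n) - f (a + n + 1)) + (t - 1) (f (b + n) - f (b + n + 1))) / 2`;
summing gives the two bounds. The second comparison says that `(f (c - s) - f (c + s)) / s`
increases with `s`, which holds because `s ↦ f (c - s) - f (c + s)` vanishes at `0` and is strictly
convex: its derivative `(j + 1) ((c - s) ^ (-j - 2) + (c + s) ^ (-j - 2))` increases.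
-/

noncomputable def psi : ℝ → ℝ := deriv (fun x => Real.log (Real.Gamma x))

open Filter Topology Finset Set

theorem hasDerivAt_log_Gamma {x : ℝ} (hx : 0 < x) :
    HasDerivAt (fun y => Real.log (Real.Gamma y)) (psi x) x := by
  have hΓ : DifferentiableAt ℝ Real.Gamma x :=
    Real.differentiableAt_Gamma fun m => by linarith [(m.cast_nonneg : (0 : ℝ) ≤ m)]
  exact (hΓ.log (Real.Gamma_pos_of_pos hx).ne').hasDerivAt

theorem psi_add_one {x : ℝ} (hx : 0 < x) : psi (x + 1) = psi x + x⁻¹ := by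
  have hfeq : (fun y => Real.log (Real.Gamma (y + 1))) =ᶠ[𝓝 x]
      fun y => Real.log (Real.Gamma y) + Real.log y := by
    filter_upwards [Ioi_mem_nhds hx] with y hy
    rw [Real.Gamma_add_one hy.ne', Real.log_mul hy.ne' (Real.Gamma_pos_of_pos hy).ne', add_comm]
  have hshift := (hasDerivAt_log_Gamma (by linarith : 0 < x + 1)).comp_add_const x 1
  exact hshift.unique
    (((hasDerivAt_log_Gamma hx).add (Real.hasDerivAt_log hx.ne')).congr_of_eventuallyEq hfeq)

theorem psi_add_nat {x : ℝ} (hx : 0 < x) (N : ℕ) :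
    psi (x + N) = psi x + ∑ i ∈ range N, (x + i)⁻¹ := by
  induction N with
  | zero => simp
  | succ N ih =>
    rw [Nat.cast_succ, ← add_assoc, psi_add_one (by positivity), ih, sum_range_succ, add_assoc]

theorem psi_monotoneOn : MonotoneOn psi (Ioi 0) :=
  Real.convexOn_log_Gamma.monotoneOn_deriv fun _ hx => (hasDerivAt_log_Gamma hx).differentiableAt

theorem tendsto_psi_add_nat_sub {a b : ℝ} (ha : 0 < a) (hab : a ≤ b) :
    Tendsto (fun N : ℕ => psi (b + N) - psi (a + N)) atTop (𝓝 0) := by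
  have hb : 0 < b := ha.trans_le hab
  set m := ⌈b - a⌉₊
  have hlow : ∀ N : ℕ, 0 ≤ psi (b + N) - psi (a + N) := fun N =>
    sub_nonneg.2 (psi_monotoneOn (Set.mem_Ioi.2 (by positivity))
      (Set.mem_Ioi.2 (by positivity)) (by linarith))
  have hup : ∀ N : ℕ, psi (b + N) - psi (a + N) ≤ ∑ i ∈ range m, (a + N + i)⁻¹ := fun N => by
    have hle := psi_monotoneOn (a := b + N) (b := a + N + m) (Set.mem_Ioi.2 (by positivity))
      (Set.mem_Ioi.2 (by positivity)) (by linarith [Nat.le_ceil (b - a)])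
    rw [psi_add_nat (x := a + N) (by positivity)] at hle
    linarith
  have hlim : Tendsto (fun N : ℕ => ∑ i ∈ range m, (a + N + i)⁻¹) atTop (𝓝 0) := by
    simpa using tendsto_finsetSum (range m) fun i _ => tendsto_inv_atTop_zero.comp
      (tendsto_atTop_add_const_right _ _
        (tendsto_atTop_add_const_left _ a tendsto_natCast_atTop_atTop))
  exact squeeze_zero hlow hup hlim

theorem hasSum_inv_add_sub_inv_add_of_le {a b : ℝ} (ha : 0 < a) (hab : a ≤ b) :
    HasSum (fun n : ℕ => (a + n)⁻¹ - (b + n)⁻¹) (psi b - psi a) := by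
  have hb : 0 < b := ha.trans_le hab
  rw [hasSum_iff_tendsto_nat_of_nonneg fun n =>
    sub_nonneg.2 (inv_anti₀ (by positivity) (by linarith))]
  have hpartial : ∀ N : ℕ, ∑ n ∈ range N, ((a + n)⁻¹ - (b + n)⁻¹)
      = (psi b - psi a) - (psi (b + N) - psi (a + N)) := fun N => by
    rw [sum_sub_distrib, psi_add_nat ha, psi_add_nat hb]; ring
  simpa [hpartial] using tendsto_const_nhds.sub (tendsto_psi_add_nat_sub ha hab)

theorem hasSum_inv_add_sub_inv_add {a b : ℝ} (ha : 0 < a) (hb : 0 < b) :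
    HasSum (fun n : ℕ => (a + n)⁻¹ - (b + n)⁻¹) (psi b - psi a) := by
  rcases le_total a b with hab | hba
  · exact hasSum_inv_add_sub_inv_add_of_le ha hab
  · simpa using (hasSum_inv_add_sub_inv_add_of_le hb hba).neg

theorem hasDerivAt_inv_pow (m : ℕ) {x : ℝ} (hx : x ≠ 0) :
    HasDerivAt (fun y => (y ^ m)⁻¹) (-(m * (x ^ (m + 1))⁻¹)) x := by
  have h := hasDerivAt_zpow (-(m : ℤ)) x (Or.inl hx)
  have e : -(m : ℤ) - 1 = -((m + 1 : ℕ) : ℤ) := by push_cast; ring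
  simp only [e, zpow_neg, zpow_natCast] at h
  exact h.congr_deriv (by push_cast; ring)

noncomputable def hurwitzSum (m : ℕ) (x : ℝ) : ℝ := ∑' n : ℕ, ((x + n) ^ m)⁻¹

theorem summable_inv_add_pow {c : ℝ} (hc : 0 < c) {m : ℕ} (hm : 2 ≤ m) :
    Summable fun n : ℕ => ((c + n) ^ m)⁻¹ := by
  have h := (Real.summable_one_div_nat_add_rpow c m).2 (by exact_mod_cast hm)
  refine h.congr fun n => ?_
  rw [Real.rpow_natCast, abs_of_pos (by positivity), add_comm, one_div]

theorem hasDerivAt_hurwitzSum {m : ℕ} (hm : 2 ≤ m) {x : ℝ} (hx : 0 < x) :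
    HasDerivAt (hurwitzSum m) (-(m * hurwitzSum (m + 1) x)) x := by
  have hx2 : 0 < x / 2 := half_pos hx
  have H := hasDerivAt_tsum_of_isPreconnected
    (g := fun (n : ℕ) (y : ℝ) => ((y + n) ^ m)⁻¹)
    (g' := fun (n : ℕ) (y : ℝ) => -(m * ((y + n) ^ (m + 1))⁻¹))
    (u := fun n : ℕ => m * ((x / 2 + n) ^ (m + 1))⁻¹) (t := Ioi (x / 2))
    ((summable_inv_add_pow hx2 (by omega)).mul_left _) isOpen_Ioi isPreconnected_Ioi
    (fun n y hy => (hasDerivAt_inv_pow m (by have := hx2.trans hy; positivity)).comp_add_const y n)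
    (fun n y hy => ?_) (half_lt_self hx) (summable_inv_add_pow hx (by omega)) (half_lt_self hx)
  · rwa [hurwitzSum, ← tsum_mul_left, ← tsum_neg]
  · have hy : x / 2 < y := hy
    rw [norm_neg, norm_mul, Real.norm_natCast, norm_inv, norm_pow,
      Real.norm_of_nonneg (by linarith)]
    gcongr

theorem hasDerivAt_psi {x : ℝ} (hx : 0 < x) : HasDerivAt psi (hurwitzSum 2 x) x := by
  set c := x / 2
  have hc : 0 < c := half_pos hx
  have hrepr : psi =ᶠ[𝓝 x] fun y => psi c + ∑' n : ℕ, ((c + n)⁻¹ - (y + n)⁻¹) := by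
    filter_upwards [Ioi_mem_nhds (half_lt_self hx)] with y hy
    rw [(hasSum_inv_add_sub_inv_add hc (hc.trans hy)).tsum_eq]
    ring
  have H := hasDerivAt_tsum_of_isPreconnected
    (g := fun (n : ℕ) (y : ℝ) => (c + n)⁻¹ - (y + n)⁻¹)
    (g' := fun (n : ℕ) (y : ℝ) => ((y + n) ^ 2)⁻¹)
    (u := fun n : ℕ => ((c + n) ^ 2)⁻¹) (t := Ioi c)
    (summable_inv_add_pow hc le_rfl) isOpen_Ioi isPreconnected_Ioi
    (fun n y hy => by
      simpa using ((hasDerivAt_inv (by have := hc.trans hy; positivity)).comp_add_const y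
        (n : ℝ)).const_sub ((c + n)⁻¹))
    (fun n y hy => ?_) (half_lt_self hx) (hasSum_inv_add_sub_inv_add hc hx).summable
    (half_lt_self hx)
  · exact (H.const_add (psi c)).congr_of_eventuallyEq hrepr
  · have hy : c < y := hy
    rw [norm_inv, norm_pow, Real.norm_of_nonneg (by linarith)]
    gcongr

theorem iteratedDeriv_succ_psi (j : ℕ) {x : ℝ} (hx : 0 < x) :
    iteratedDeriv (j + 1) psi x = (-1) ^ j * (j + 1).factorial * hurwitzSum (j + 2) x := by
  induction j generalizing x with
  | zero => simp [(hasDerivAt_psi hx).deriv]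
  | succ j ih =>
    have hfeq : iteratedDeriv (j + 1) psi =ᶠ[𝓝 x]
        fun y => (-1) ^ j * (j + 1).factorial * hurwitzSum (j + 2) y := by
      filter_upwards [Ioi_mem_nhds hx] with y hy using ih hy
    rw [iteratedDeriv_succ, ((hasDerivAt_hurwitzSum (by omega) hx).const_mul
      ((-1) ^ j * ((j + 1).factorial : ℝ))).congr_of_eventuallyEq hfeq |>.deriv,
      Nat.factorial_succ (j + 1)]
    push_cast
    ring

theorem hasSum_iteratedDeriv_psi_sub (j : ℕ) {a b : ℝ} (ha : 0 < a) (hb : 0 < b) :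
    HasSum (fun n : ℕ => ((a + n) ^ (j + 1))⁻¹ - ((b + n) ^ (j + 1))⁻¹)
      ((-1) ^ j * (iteratedDeriv j psi b - iteratedDeriv j psi a) / j.factorial) := by
  cases j with
  | zero => simpa using hasSum_inv_add_sub_inv_add ha hb
  | succ j =>
    have e : (-1) ^ (j + 1) * (iteratedDeriv (j + 1) psi b - iteratedDeriv (j + 1) psi a)
        / ((j + 1).factorial : ℝ) = hurwitzSum (j + 2) a - hurwitzSum (j + 2) b := by
      rw [iteratedDeriv_succ_psi j ha, iteratedDeriv_succ_psi j hb, pow_succ]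
      field_simp
      rw [← pow_mul, Even.neg_one_pow ⟨j, by ring⟩]
      ring
    rw [e]
    exact (summable_inv_add_pow ha (by omega)).hasSum.sub
      (summable_inv_add_pow hb (by omega)).hasSum

theorem hasSum_sub_succ_of_antitone {u : ℕ → ℝ} (hu : Antitone u) (h : Tendsto u atTop (𝓝 0)) :
    HasSum (fun n => u n - u (n + 1)) (u 0) := by
  rw [hasSum_iff_tendsto_nat_of_nonneg fun n => sub_nonneg.2 (hu n.le_succ)]
  simp_rw [sum_range_sub']
  simpa using tendsto_const_nhds.sub h

theorem hasSum_inv_pow_sub_inv_pow_add_one {c : ℝ} (hc : 0 < c) {k : ℕ} (hk : k ≠ 0) :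
    HasSum (fun n : ℕ => ((c + n) ^ k)⁻¹ - ((c + n + 1) ^ k)⁻¹) (c ^ k)⁻¹ := by
  have hanti : Antitone fun n : ℕ => ((c + n) ^ k)⁻¹ := fun m n hmn => by
    have : (m : ℝ) ≤ n := by exact_mod_cast hmn
    dsimp only
    gcongr
  have hlim : Tendsto (fun n : ℕ => ((c + n) ^ k)⁻¹) atTop (𝓝 0) :=
    ((tendsto_pow_atTop hk).comp
      (tendsto_atTop_add_const_left _ c tendsto_natCast_atTop_atTop)).inv_tendsto_atTop
  simpa [add_assoc] using hasSum_sub_succ_of_antitone hanti hlim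

theorem hasDerivAt_inv_pow_const_sub (m : ℕ) {c s : ℝ} (hs : c - s ≠ 0) :
    HasDerivAt (fun s => ((c - s) ^ m)⁻¹) (m * ((c - s) ^ (m + 1))⁻¹) s := by
  simpa using (hasDerivAt_inv_pow m hs).comp_const_sub c s

theorem hasDerivAt_inv_pow_const_add (m : ℕ) {c s : ℝ} (hs : c + s ≠ 0) :
    HasDerivAt (fun s => ((c + s) ^ m)⁻¹) (-(m * ((c + s) ^ (m + 1))⁻¹)) s :=
  (hasDerivAt_inv_pow m hs).comp_const_add c s

theorem strictMonoOn_inv_pow_sub_add_inv_pow_add (c : ℝ) {m : ℕ} (hm : m ≠ 0) :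
    StrictMonoOn (fun s => ((c - s) ^ m)⁻¹ + ((c + s) ^ m)⁻¹) (Ico 0 c) := by
  have hderiv : ∀ s ∈ Ico 0 c, HasDerivAt (fun s => ((c - s) ^ m)⁻¹ + ((c + s) ^ m)⁻¹)
      (m * ((c - s) ^ (m + 1))⁻¹ - m * ((c + s) ^ (m + 1))⁻¹) s := fun s hs =>
    ((hasDerivAt_inv_pow_const_sub m (c := c) (s := s) (by linarith [hs.2])).fun_add
      (hasDerivAt_inv_pow_const_add m (c := c) (s := s) (by linarith [hs.1, hs.2]))).congr_deriv
      (sub_eq_add_neg _ _).symm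
  refine strictMonoOn_of_deriv_pos (convex_Ico 0 c)
    (fun s hs => (hderiv s hs).continuousAt.continuousWithinAt) fun s hs => ?_
  rw [interior_Ico] at hs
  rw [(hderiv s (Ioo_subset_Ico_self hs)).deriv, sub_pos]
  have : 0 < c - s := by linarith [hs.2]
  gcongr
  linarith [hs.1]

theorem strictConvexOn_inv_pow_sub_sub_inv_pow_add (c : ℝ) {k : ℕ} (hk : k ≠ 0) :
    StrictConvexOn ℝ (Ico 0 c) (fun s => ((c - s) ^ k)⁻¹ - ((c + s) ^ k)⁻¹) := by
  have hderiv : ∀ s ∈ Ico 0 c, HasDerivAt (fun s => ((c - s) ^ k)⁻¹ - ((c + s) ^ k)⁻¹)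
      (k * (((c - s) ^ (k + 1))⁻¹ + ((c + s) ^ (k + 1))⁻¹)) s := fun s hs =>
    ((hasDerivAt_inv_pow_const_sub k (c := c) (s := s) (by linarith [hs.2])).fun_sub
      (hasDerivAt_inv_pow_const_add k (c := c) (s := s) (by linarith [hs.1, hs.2]))).congr_deriv
      (by ring)
  refine StrictMonoOn.strictConvexOn_of_deriv (convex_Ico 0 c)
    (fun s hs => (hderiv s hs).continuousAt.continuousWithinAt) ?_
  rw [interior_Ico]
  have hmono := strictMonoOn_inv_pow_sub_add_inv_pow_add c (Nat.succ_ne_zero k)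
  have hk0 : (0 : ℝ) < k := by positivity
  intro r hr s hs hrs
  rw [(hderiv r (Ioo_subset_Ico_self hr)).deriv, (hderiv s (Ioo_subset_Ico_self hs)).deriv]
  exact mul_lt_mul_of_pos_left (hmono (Ioo_subset_Ico_self hr) (Ioo_subset_Ico_self hs) hrs) hk0

theorem one_add_mul_inv_pow_sub_lt {x t : ℝ} (hx : 0 < x) (ht0 : 0 < t) (ht1 : t < 1)
    {k : ℕ} (hk : k ≠ 0) :
    (1 + t) * (((x + t) ^ k)⁻¹ - ((x + 1) ^ k)⁻¹)
      < (1 - t) * ((x ^ k)⁻¹ - ((x + t + 1) ^ k)⁻¹) := by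
  set c := x + (1 + t) / 2 with hc
  have hsecant := (strictConvexOn_inv_pow_sub_sub_inv_pow_add c hk).secant_strict_mono
    (a := 0) (x := (1 - t) / 2) (y := (1 + t) / 2) ⟨le_rfl, by positivity⟩
    ⟨by linarith, by linarith⟩ ⟨by linarith, by linarith⟩ (by linarith) (by linarith) (by linarith)
  have e1 : c - (1 - t) / 2 = x + t := by ring
  have e2 : c + (1 - t) / 2 = x + 1 := by ring
  have e3 : c - (1 + t) / 2 = x := by ring
  have e4 : c + (1 + t) / 2 = x + t + 1 := by ring
  simp only [e1, e2, e3, e4, sub_zero, add_zero, sub_self] at hsecant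
  rw [div_lt_div_iff₀ (by linarith) (by linarith)] at hsecant
  linarith

theorem hasSum_inv_pow_sub_lt {a b : ℝ} (ha : 0 < a) (hb : 0 < b) (hba : b < a + 1) {k : ℕ}
    (hk : k ≠ 0) {S : ℝ} (hS : HasSum (fun n : ℕ => ((a + n) ^ k)⁻¹ - ((b + n) ^ k)⁻¹) S) :
    S < (a ^ k)⁻¹ := by
  have hlt : ∀ n : ℕ, ((a + n) ^ k)⁻¹ - ((b + n) ^ k)⁻¹ < ((a + n) ^ k)⁻¹ - ((a + n + 1) ^ k)⁻¹ :=
    fun n => sub_lt_sub_left (inv_strictAnti₀ (by positivity)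
      (pow_lt_pow_left₀ (by linarith) (by positivity) hk)) _
  exact hasSum_lt (fun n => (hlt n).le) (hlt 0) hS (hasSum_inv_pow_sub_inv_pow_add_one ha hk)

theorem lt_hasSum_inv_pow_sub {a b : ℝ} (ha : 0 < a) (hab : a < b) (hba : b < a + 1) {k : ℕ}
    (hk : k ≠ 0) {S : ℝ} (hS : HasSum (fun n : ℕ => ((a + n) ^ k)⁻¹ - ((b + n) ^ k)⁻¹) S) :
    ((1 + (b - a)) * (a ^ k)⁻¹ + (b - a - 1) * (b ^ k)⁻¹) / 2 < S := by
  have hb : 0 < b := ha.trans hab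
  have hcomb := (((hasSum_inv_pow_sub_inv_pow_add_one ha hk).mul_left (1 + (b - a))).add
    ((hasSum_inv_pow_sub_inv_pow_add_one hb hk).mul_left (b - a - 1))).div_const 2
  have hlt : ∀ n : ℕ, ((1 + (b - a)) * (((a + n) ^ k)⁻¹ - ((a + n + 1) ^ k)⁻¹)
      + (b - a - 1) * (((b + n) ^ k)⁻¹ - ((b + n + 1) ^ k)⁻¹)) / 2
      < ((a + n) ^ k)⁻¹ - ((b + n) ^ k)⁻¹ := fun n => by
    have h := one_add_mul_inv_pow_sub_lt (x := a + n) (t := b - a) (by positivity) (by linarith)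
      (by linarith) hk
    have e : a + n + (b - a) = b + n := by ring
    rw [e] at h
    linarith
  exact hasSum_lt (fun n => (hlt n).le) (hlt 0) hcomb hS

theorem polygamma_divided_difference_bounds (a b : ℝ) (ha : 0 < a) (hb : 0 < b)
    (hab : a ≠ b) (h1 : |b - a| < 1) (k : ℕ) (hk : 1 ≤ k) :
    ((k - 1).factorial / 2 : ℝ) *
        ((1 / (b - a) + 1) / a ^ k + (1 - 1 / (b - a)) / b ^ k) <
      (-1 : ℝ) ^ (k - 1) *
        (iteratedDeriv (k - 1) psi b - iteratedDeriv (k - 1) psi a) / (b - a) ∧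
    (-1 : ℝ) ^ (k - 1) *
        (iteratedDeriv (k - 1) psi b - iteratedDeriv (k - 1) psi a) / (b - a) <
      ((k - 1).factorial / 2 : ℝ) *
        ((1 / (b - a) + 1 / |b - a|) / a ^ k + (1 / |b - a| - 1 / (b - a)) / b ^ k) := by
  obtain ⟨j, rfl⟩ := Nat.exists_eq_add_of_le' hk
  rw [Nat.add_sub_cancel]
  -- all three expressions are symmetric in `a` and `b`
  wlog hlt : a < b generalizing a b
  · have hba : b < a := lt_of_le_of_ne (not_lt.1 hlt) hab.symm
    have hsub : a - b ≠ 0 := sub_ne_zero.2 hab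
    have hsub' : b - a ≠ 0 := sub_ne_zero.2 hab.symm
    rw [abs_sub_comm] at h1 ⊢
    convert this b a hb ha hab.symm h1 hba using 2 <;> field_simp <;> ring
  have ht : 0 < b - a := sub_pos.2 hlt
  rw [abs_of_pos ht] at h1 ⊢
  have hS := hasSum_iteratedDeriv_psi_sub j ha hb
  have hlow := lt_hasSum_inv_pow_sub ha hlt (by linarith) (by omega) hS
  have hup := hasSum_inv_pow_sub_lt ha hb (by linarith) (by omega) hS
  set S := (-1) ^ j * (iteratedDeriv j psi b - iteratedDeriv j psi a) / j.factorial with hSdef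
  have hmid : (-1) ^ j * (iteratedDeriv j psi b - iteratedDeriv j psi a) / (b - a)
      = j.factorial / (b - a) * S := by
    rw [hSdef]
    field_simp
  rw [hmid]
  constructor
  · calc _ = j.factorial / (b - a) *
          (((1 + (b - a)) * (a ^ (j + 1))⁻¹ + (b - a - 1) * (b ^ (j + 1))⁻¹) / 2) := by
          field_simp
      _ < _ := by gcongr
  · calc _ < j.factorial / (b - a) * (a ^ (j + 1))⁻¹ := by gcongr
      _ = _ := by field_simp; ring
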